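/- arXiv:0804.4716 — 2 statements merged into one kernel-verified Lean document; each statement's English description precedes it below -/
import Mathlib

section
/- For every folding pair (w,T) ∈ ℱ(λ), the filling f(w,T) is nonattacking; that is, f(ℱ(λ)) ⊆ T(λ,n). -/
open Finset

namespace Compress

attribute [local instance] Classical.propDecidable

noncomputable section

/-! ### Permutations of `{1,…,n}`, 1-based conventions -/

/-- The 1-based index `i ∈ {1,…,n}` as an element of `Fin n`. -/
def idx (n : ℕ) [NeZero n] (i : ℕ) : Fin n :=
  ⟨(i - 1) % n, Nat.mod_lt _ (Nat.pos_of_ne_zero (NeZero.ne n))⟩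

/-- The 1-based value `w(i) ∈ {1,…,n}` of a permutation `w ∈ S_n`. -/
def pv {n : ℕ} [NeZero n] (w : Equiv.Perm (Fin n)) (i : ℕ) : ℕ :=
  (w (idx n i)).val + 1

/-- The transposition `(i,k)` of `{1,…,n}` (1-based). -/
def tr (n : ℕ) [NeZero n] (i k : ℕ) : Equiv.Perm (Fin n) :=
  Equiv.swap (idx n i) (idx n k)

/-- The Coxeter length of `w ∈ S_n`, i.e. its number of inversions. -/
def len {n : ℕ} [NeZero n] (w : Equiv.Perm (Fin n)) : ℕ :=
  ((Finset.univ : Finset (Fin n × Fin n)).filter fun p => p.1 < p.2 ∧ w p.2 < w p.1).card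

/-- Right multiplication of `w` by a list of transpositions (given as 1-based pairs),
taken from left to right. -/
def applyTs {n : ℕ} [NeZero n] (w : Equiv.Perm (Fin n)) (L : List (ℕ × ℕ)) :
    Equiv.Perm (Fin n) :=
  L.foldl (fun u p => u * tr n p.1 p.2) w

/-! ### Subsequences of a list of transpositions, encoded by sets of positions -/

/-- The subsequence of the list `Δ` of transpositions occupying the (0-based) positions in `J`,
listed in increasing order of positions. -/
def pickP (Δ : List (ℕ × ℕ)) (J : Finset ℕ) : List (ℕ × ℕ) :=
  (J.sort (· ≤ ·)).map fun r => Δ.getD r (0, 0)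

/-- `w r_1 ⋯ r_s` where `r_1,…,r_s` is the subsequence of `Δ` at positions `J`. -/
def wT {n : ℕ} [NeZero n] (w : Equiv.Perm (Fin n)) (Δ : List (ℕ × ℕ)) (J : Finset ℕ) :
    Equiv.Perm (Fin n) :=
  applyTs w (pickP Δ J)

/-- The partial product `w r_1 ⋯ r_{a-1}` just before using the entry at position `r ∈ J`. -/
def stepPerm {n : ℕ} [NeZero n] (w : Equiv.Perm (Fin n)) (Δ : List (ℕ × ℕ)) (J : Finset ℕ)
    (r : ℕ) : Equiv.Perm (Fin n) :=
  applyTs w (pickP Δ (J.filter fun x => x < r))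

/-- The entry at position `r ∈ J` is positive in the increasing-length convention:
`ℓ(w r_1⋯r_{a−1}) < ℓ(w r_1⋯r_a)`. -/
def isPosInc {n : ℕ} [NeZero n] (w : Equiv.Perm (Fin n)) (Δ : List (ℕ × ℕ)) (J : Finset ℕ)
    (r : ℕ) : Prop :=
  len (stepPerm w Δ J r) <
    len (stepPerm w Δ J r * tr n (Δ.getD r (0, 0)).1 (Δ.getD r (0, 0)).2)

/-- The entry at position `r ∈ J` is positive in the decreasing-length convention
(a positive folding): `ℓ(w r_1⋯r_{a−1}) > ℓ(w r_1⋯r_a)`. -/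
def isPosDec {n : ℕ} [NeZero n] (w : Equiv.Perm (Fin n)) (Δ : List (ℕ × ℕ)) (J : Finset ℕ)
    (r : ℕ) : Prop :=
  len (stepPerm w Δ J r * tr n (Δ.getD r (0, 0)).1 (Δ.getD r (0, 0)).2) <
    len (stepPerm w Δ J r)

/-! ### The field `ℚ(q,t)` -/

/-- The field `ℚ(q,t)` of rational functions in two variables. -/
abbrev Kqt : Type := FractionRing (MvPolynomial (Fin 2) ℚ)

/-- The variable `q` of `ℚ(q,t)`. -/
def qq : Kqt := algebraMap (MvPolynomial (Fin 2) ℚ) Kqt (MvPolynomial.X 0)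

/-- The variable `t` of `ℚ(q,t)`. -/
def tt : Kqt := algebraMap (MvPolynomial (Fin 2) ℚ) Kqt (MvPolynomial.X 1)

/-! ### The partition λ, its diagram and statistics on fillings -/

/-- `conj n lam j = λ'_j`, the length of column `j`. -/
def conj (n : ℕ) (lam : ℕ → ℕ) (j : ℕ) : ℕ :=
  ((Finset.Icc 1 (n - 1)).filter fun i => j ≤ lam i).card

/-- The cells `(i,j)` of the Young diagram of λ: `1 ≤ i ≤ n−1`, `1 ≤ j ≤ λ_i`. -/
def cells (n : ℕ) (lam : ℕ → ℕ) : Finset (ℕ × ℕ) :=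
  (Finset.Icc 1 (n - 1) ×ˢ Finset.Icc 1 (lam 1)).filter fun c => c.2 ≤ lam c.1

/-- Two cells attack each other: same column, or consecutive columns with the
left-column cell strictly above the right-column cell (column `j+1` is left of column `j`). -/
def attack (u v : ℕ × ℕ) : Prop :=
  (u.2 = v.2 ∧ u.1 ≠ v.1) ∨ (u.2 = v.2 + 1 ∧ u.1 < v.1) ∨ (v.2 = u.2 + 1 ∧ v.1 < u.1)

/-- `u` comes before `v` in the reading order (columns right to left, i.e. column 1 first,
each column top to bottom). -/
def readBefore (u v : ℕ × ℕ) : Prop :=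
  u.2 < v.2 ∨ (u.2 = v.2 ∧ u.1 < v.1)

/-- σ is a nonattacking filling of λ with entries in `{1,…,n}`, i.e. `σ ∈ T(λ,n)`. -/
def NonAttacking (n : ℕ) (lam : ℕ → ℕ) (σ : ℕ × ℕ → ℕ) : Prop :=
  (∀ u ∈ cells n lam, σ u ∈ Finset.Icc 1 n) ∧
    ∀ u ∈ cells n lam, ∀ v ∈ cells n lam, attack u v → σ u ≠ σ v

/-- The descent set of a filling. -/
def DesSet (n : ℕ) (lam : ℕ → ℕ) (σ : ℕ × ℕ → ℕ) : Finset (ℕ × ℕ) :=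
  (cells n lam).filter fun u => (u.1, u.2 + 1) ∈ cells n lam ∧ σ (u.1, u.2 + 1) < σ u

/-- `Diff(σ)`. -/
def DiffSet (n : ℕ) (lam : ℕ → ℕ) (σ : ℕ × ℕ → ℕ) : Finset (ℕ × ℕ) :=
  (cells n lam).filter fun u => (u.1, u.2 + 1) ∈ cells n lam ∧ σ (u.1, u.2 + 1) ≠ σ u

/-- `arm(i,j) = λ_i − j`. -/
def armC (lam : ℕ → ℕ) (u : ℕ × ℕ) : ℕ := lam u.1 - u.2

/-- `leg(i,j) = λ'_j − i`. -/
def legC (n : ℕ) (lam : ℕ → ℕ) (u : ℕ × ℕ) : ℕ := conj n lam u.2 - u.1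

/-- `maj(σ) = Σ_{u ∈ Des(σ)} arm(u)`. -/
def majStat (n : ℕ) (lam : ℕ → ℕ) (σ : ℕ × ℕ → ℕ) : ℕ :=
  ∑ u ∈ DesSet n lam σ, armC lam u

/-- `|Inv(σ)|`: the number of pairs of attacking cells `u` before `v` in reading order
with `σ(u) > σ(v)`. -/
def invPairsL (n : ℕ) (lam : ℕ → ℕ) (σ : ℕ × ℕ → ℕ) : ℕ :=
  ((cells n lam ×ˢ cells n lam).filter fun x =>
    attack x.1 x.2 ∧ readBefore x.1 x.2 ∧ σ x.2 < σ x.1).card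

/-- `inv(σ) = |Inv(σ)| − Σ_{u ∈ Des(σ)} leg(u)`. -/
def invStat (n : ℕ) (lam : ℕ → ℕ) (σ : ℕ × ℕ → ℕ) : ℤ :=
  (invPairsL n lam σ : ℤ) - ∑ u ∈ DesSet n lam σ, (legC n lam u : ℤ)

/-- `n(λ) = Σ_i (i−1) λ_i`. -/
def nlam (n : ℕ) (lam : ℕ → ℕ) : ℕ :=
  ∑ i ∈ Finset.Icc 1 n, (i - 1) * lam i

/-- The Haglund–Haiman–Loehr-type weight of a filling:
`HHL(σ) = t^{n(λ)−inv(σ)} q^{maj(σ)} Π_{u∈Diff(σ)} (1−t)/(1−q^{arm(u)} t^{leg(u)+1})`. -/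
def HHL (n : ℕ) (lam : ℕ → ℕ) (σ : ℕ × ℕ → ℕ) : Kqt :=
  tt ^ ((nlam n lam : ℤ) - invStat n lam σ) * qq ^ majStat n lam σ *
    ∏ u ∈ DiffSet n lam σ, (1 - tt) / (1 - qq ^ armC lam u * tt ^ (legC n lam u + 1))

/-! ### The λ-chain Γ -/

/-- The row `(i,n),(i,n−1),…,(i,low)`. -/
def rowL (n i low : ℕ) : List (ℕ × ℕ) :=
  (List.range (n + 1 - low)).map fun r => (i, n - r)

/-- `Γ(k)`: rows `i = k, k−1, …, 1`, row `i` being `(i,n),…,(i,k+1)`. -/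
def GammaK (n k : ℕ) : List (ℕ × ℕ) :=
  (List.range k).flatMap fun s => rowL n (k - s) (k + 1)

/-- `Γ'(k)`: rows `i = k, k−1, …, 1`, row `i` being `(i,n),…,(i,k+2)`
(the last transposition `(i,k+1)` of each row of `Γ(k)` removed). -/
def GammaK' (n k : ℕ) : List (ℕ × ℕ) :=
  (List.range k).flatMap fun s => rowL n (k - s) (k + 2)

/-- The λ-chain `Γ = Γ_{λ_1} Γ_{λ_1−1} ⋯ Γ_2`, where `Γ_j = Γ'(λ'_j)` if
`j = min{i : λ'_i = λ'_j}` (equivalently `λ'_{j−1} ≠ λ'_j`) and `Γ_j = Γ(λ'_j)` otherwise.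
Each entry records its segment index `j` together with the root `(i,k)`. -/
def lamChain (n : ℕ) (lam : ℕ → ℕ) : List (ℕ × ℕ × ℕ) :=
  (List.range (lam 1 - 1)).flatMap fun s =>
    let j := lam 1 - s
    let seg :=
      if conj n lam (j - 1) = conj n lam j then GammaK n (conj n lam j)
      else GammaK' n (conj n lam j)
    seg.map fun p => (j, p.1, p.2)

/-- The underlying list of roots (transpositions) of the λ-chain. -/
def chainRoots (Γ : List (ℕ × ℕ × ℕ)) : List (ℕ × ℕ) := Γ.map fun e => e.2

/-! ### The Ram–Yip weight and the filling map -/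

/-- The Ram–Yip weight `RY(w,T)` of a folding pair, where `T` is the subsequence of the
λ-chain at positions `J`. -/
def RY (n : ℕ) [NeZero n] (lam : ℕ → ℕ) (w : Equiv.Perm (Fin n)) (J : Finset ℕ) : Kqt :=
  tt ^ (((len w : ℤ) - (len (wT w (chainRoots (lamChain n lam)) J) : ℤ) - (J.card : ℤ)) / 2) *
    (1 - tt) ^ J.card *
    ∏ r ∈ J,
      (let e := (lamChain n lam).getD r (0, 0, 0)
       let a := lam e.2.1 - (e.1 - 1)
       if isPosDec w (chainRoots (lamChain n lam)) J r then
         (1 - qq ^ a * tt ^ (e.2.2 - e.2.1))⁻¹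
       else qq ^ a * tt ^ (e.2.2 - e.2.1) * (1 - qq ^ a * tt ^ (e.2.2 - e.2.1))⁻¹)

/-- `π_j = w T_{λ_1} ⋯ T_{j+1}`: the product of `w` with the entries of `T` lying in the
segments of column index `> j`. -/
def pij (n : ℕ) [NeZero n] (lam : ℕ → ℕ) (w : Equiv.Perm (Fin n)) (J : Finset ℕ) (j : ℕ) :
    Equiv.Perm (Fin n) :=
  applyTs w (pickP (chainRoots (lamChain n lam))
    (J.filter fun r => j < ((lamChain n lam).getD r (0, 0, 0)).1))

/-- The filling map `f`: `f(w,T)(i,j) = π_j(i)` on cells of λ (and `0` off the diagram). -/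
def fmap (n : ℕ) [NeZero n] (lam : ℕ → ℕ) (w : Equiv.Perm (Fin n)) (J : Finset ℕ) :
    ℕ × ℕ → ℕ :=
  fun c => if c ∈ cells n lam then pv (pij n lam w J c.2) c.1 else 0

/-- The fiber `f⁻¹(σ)` of the filling map over σ, inside `ℱ(λ)`. -/
def fiberSet (n : ℕ) [NeZero n] (lam : ℕ → ℕ) (σ : ℕ × ℕ → ℕ) :
    Finset (Equiv.Perm (Fin n) × Finset ℕ) :=
  (Finset.univ ×ˢ (Finset.range (lamChain n lam).length).powerset).filter
    fun p => ∀ u ∈ cells n lam, fmap n lam p.1 p.2 u = σ u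

/-- The Finset of all nonattacking fillings `T(λ,n)` (normalized to vanish off the diagram). -/
def TFinset (n : ℕ) (lam : ℕ → ℕ) : Finset (ℕ × ℕ → ℕ) :=
  (((cells n lam).pi fun _ => Finset.Icc 1 n).image
      fun g c => if h : c ∈ cells n lam then g c h else 0).filter
    fun σ => NonAttacking n lam σ

/-- The monomial `x^{content(σ)} = x_1^{c_1} ⋯ x_n^{c_n}` in `ℚ(q,t)[x_1,…,x_n]`. -/
def contentMon (n : ℕ) [NeZero n] (lam : ℕ → ℕ) (σ : ℕ × ℕ → ℕ) :
    MvPolynomial (Fin n) Kqt :=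
  ∏ a ∈ Finset.Icc 1 n,
    (MvPolynomial.X (idx n a)) ^ (((cells n lam).filter fun c => σ c = a).card)

/-! ### The weight μ(T) and the content vector (for Statement 4) -/

/-- `l_r = #{r' ≤ r : β_{r'} = β_r}` for the `r`-th entry of the λ-chain (0-based positions). -/
def lcount (Γ : List (ℕ × ℕ × ℕ)) (r : ℕ) : ℕ :=
  ((List.range (r + 1)).filter fun r' => (Γ.getD r' (0, 0, 0)).2 = (Γ.getD r (0, 0, 0)).2).length

/-- The affine map `r̂_r : v ↦ v − (v_i − v_k − l_r)(e_i − e_k)` of `ℝⁿ`,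
for the `r`-th entry `(i,k)` of the λ-chain. -/
def hatr (n : ℕ) [NeZero n] (Γ : List (ℕ × ℕ × ℕ)) (r : ℕ) (v : Fin n → ℝ) : Fin n → ℝ :=
  fun x =>
    v x - (v (idx n (Γ.getD r (0, 0, 0)).2.1) - v (idx n (Γ.getD r (0, 0, 0)).2.2)
            - (lcount Γ r : ℝ)) *
      ((if x = idx n (Γ.getD r (0, 0, 0)).2.1 then (1 : ℝ) else 0) -
        (if x = idx n (Γ.getD r (0, 0, 0)).2.2 then (1 : ℝ) else 0))

/-- `μ(T) = r̂_{j_1} r̂_{j_2} ⋯ r̂_{j_s}(λ) ∈ ℝⁿ` for `T` the subsequence of the λ-chain at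
positions `J = {j_1 < … < j_s}`. -/
def muT (n : ℕ) [NeZero n] (lam : ℕ → ℕ) (J : Finset ℕ) : Fin n → ℝ :=
  (J.sort (· ≤ ·)).foldr (hatr n (lamChain n lam)) fun x => (lam (x.val + 1) : ℝ)

/-- The action of `S_n` on `ℝⁿ` by permuting coordinates: `(w(v))_{w(i)} = v_i`. -/
def wAct {n : ℕ} [NeZero n] (w : Equiv.Perm (Fin n)) (v : Fin n → ℝ) : Fin n → ℝ :=
  fun x => v (w⁻¹ x)

/-- The content vector of a filling, as an element of `ℝⁿ`. -/
def contentVec (n : ℕ) (lam : ℕ → ℕ) (σ : ℕ × ℕ → ℕ) : Fin n → ℝ :=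
  fun x => (((cells n lam).filter fun c => σ c = x.val + 1).card : ℝ)

/-! ### Row sums (Statements 5 and 6) -/

/-- The weight of a subsequence `T` (at positions `J`) of a list `Δ` of transpositions, in the
single-`q` setting: `t^{(ℓ(wT)−ℓ(w)−|T|)/2}(1−t)^{|T|} Π_{(i,k)∈T⁺} 1/(1−q t^{k−i})
Π_{(i,k)∈T⁻} q t^{k−i}/(1−q t^{k−i})`, positivity in the increasing-length convention. -/
def RYrow (n : ℕ) [NeZero n] (w : Equiv.Perm (Fin n)) (Δ : List (ℕ × ℕ)) (J : Finset ℕ) : Kqt :=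
  tt ^ (((len (wT w Δ J) : ℤ) - (len w : ℤ) - (J.card : ℤ)) / 2) * (1 - tt) ^ J.card *
    ∏ r ∈ J,
      (let e := Δ.getD r (0, 0)
       if isPosInc w Δ J r then (1 - qq * tt ^ (e.2 - e.1))⁻¹
       else qq * tt ^ (e.2 - e.1) * (1 - qq * tt ^ (e.2 - e.1))⁻¹)

/-- `Δ = ((1,p+2),(1,p+3),…,(1,n))`. -/
def delta5 (n p : ℕ) : List (ℕ × ℕ) :=
  (List.range (n - p - 1)).map fun r => (1, p + 2 + r)

/-- `Δ = ((i,p+1),(i,p+2),…,(i,n))`. -/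
def delta6 (n i p : ℕ) : List (ℕ × ℕ) :=
  (List.range (n - p)).map fun r => (i, p + 1 + r)

/-! ### The field `ℚ(q_1,…,q_p,t)` and two-column fillings (Statements 7, 9, 10) -/

/-- The field `ℚ(q_1,…,q_p,t)` of rational functions in `p+1` variables. -/
abbrev Kq (p : ℕ) : Type := FractionRing (MvPolynomial (Fin (p + 1)) ℚ)

/-- The variable `q_i` (for `1 ≤ i ≤ p`). -/
def qv (p i : ℕ) : Kq p :=
  algebraMap (MvPolynomial (Fin (p + 1)) ℚ) (Kq p)
    (MvPolynomial.X ⟨(i - 1) % (p + 1), Nat.mod_lt _ (Nat.succ_pos p)⟩)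

/-- The variable `t`. -/
def tv (p : ℕ) : Kq p :=
  algebraMap (MvPolynomial (Fin (p + 1)) ℚ) (Kq p) (MvPolynomial.X ⟨p, Nat.lt_succ_self p⟩)

/-- The multi-`q` weight of a subsequence `T` (at positions `J`) of `Δ`:
`t^{(ℓ(wT)−ℓ(w)−|T|)/2}(1−t)^{|T|} Π_{(i,k)∈T⁺} 1/(1−q_i t^{k−i})
Π_{(i,k)∈T⁻} q_i t^{k−i}/(1−q_i t^{k−i})`, positivity in the increasing-length convention. -/
def RYmulti (n p : ℕ) [NeZero n] (w : Equiv.Perm (Fin n)) (Δ : List (ℕ × ℕ)) (J : Finset ℕ) :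
    Kq p :=
  tv p ^ (((len (wT w Δ J) : ℤ) - (len w : ℤ) - (J.card : ℤ)) / 2) * (1 - tv p) ^ J.card *
    ∏ r ∈ J,
      (let e := Δ.getD r (0, 0)
       if isPosInc w Δ J r then (1 - qv p e.1 * tv p ^ (e.2 - e.1))⁻¹
       else qv p e.1 * tv p ^ (e.2 - e.1) * (1 - qv p e.1 * tv p ^ (e.2 - e.1))⁻¹)

/-- `Δ = ((1,p+1),…,(1,n),(2,p+1),…,(2,n),…,(p,p+1),…,(p,n))`. -/
def delta7 (n p : ℕ) : List (ℕ × ℕ) :=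
  (List.range p).flatMap fun s => (List.range (n - p)).map fun r => (s + 1, p + 1 + r)

/-- The cells of the two-column filling `C_2C_1`, with right column (column 1) of length `p'`
and left column (column 2) of length `p`. -/
def cells2 (p p' : ℕ) : Finset (ℕ × ℕ) :=
  (Finset.Icc 1 p' ×ˢ ({1} : Finset ℕ)) ∪ (Finset.Icc 1 p ×ˢ ({2} : Finset ℕ))

/-- The entry of the two-column filling `C_2C_1` at a cell. -/
def entry2 (C2 C1 : ℕ → ℕ) : ℕ × ℕ → ℕ :=
  fun c => if c.2 = 1 then C1 c.1 else C2 c.1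

/-- `|Inv(C_2C_1)|`: the number of pairs of attacking cells `u` before `v` in reading order
with `entry(u) > entry(v)`. -/
def invPairs2 (C2 C1 : ℕ → ℕ) (p p' : ℕ) : ℕ :=
  ((cells2 p p' ×ˢ cells2 p p').filter fun x =>
    attack x.1 x.2 ∧ readBefore x.1 x.2 ∧ entry2 C2 C1 x.2 < entry2 C2 C1 x.1).card

/-- `inv(C_2C_1) = |Inv(C_2C_1)| − Σ_{u ∈ Des(C_2C_1)} leg(u)` where
`Des(C_2C_1) = {(i,1) : i ≤ p, C_1(i) > C_2(i)}` and `leg(i,1) = p' − i`. -/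
def inv2 (C2 C1 : ℕ → ℕ) (p p' : ℕ) : ℤ :=
  (invPairs2 C2 C1 p p' : ℤ) -
    ∑ i ∈ (Finset.Icc 1 p).filter fun i => C2 i < C1 i, ((p' : ℤ) - (i : ℤ))

/-- `inv(C) = #{(i,k) : i < k, C(i) > C(k)}` for a single column `C` of length `p`. -/
def invColumn (C : ℕ → ℕ) (p : ℕ) : ℕ :=
  ((Finset.Icc 1 p ×ˢ Finset.Icc 1 p).filter fun x => x.1 < x.2 ∧ C x.2 < C x.1).card

end

end Compress

/-!
Entries of one column are values of one permutation at distinct positions. For attacking cells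
`(i, j+1)` and `(k, j)` with `i < k`, write `π_j = π_{j+1} σ τ`, where `σ τ = T_{j+1}` is split
into the roots `(a, b)` with `a ≥ k` (which come first, as rows decrease along `Γ_{j+1}`) and
those with `a < k`. Every root of `Γ_{j+1}` has `b > λ'_j`, so `σ` fixes `i` and `τ` fixes `k`:
hence `π_j(k) = π_{j+1}(σ k) ≠ π_{j+1}(σ i) = π_{j+1}(i)`.
-/

namespace Compress

section Transpositions

variable {n : ℕ} [NeZero n]

lemma idx_val {a : ℕ} (ha : 1 ≤ a) (ha' : a ≤ n) : (idx n a).val = a - 1 := by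
  simp [idx, Nat.mod_eq_of_lt (show a - 1 < n by omega)]

lemma idx_injOn : Set.InjOn (idx n) (Set.Icc 1 n) := by
  rintro a ⟨ha₁, ha₂⟩ b ⟨hb₁, hb₂⟩ h
  have := congrArg Fin.val h
  rw [idx_val ha₁ ha₂, idx_val hb₁ hb₂] at this
  omega

lemma tr_apply_idx_of_ne {a b c : ℕ} (ha : a ∈ Set.Icc 1 n) (hb : b ∈ Set.Icc 1 n)
    (hc : c ∈ Set.Icc 1 n) (hac : a ≠ c) (hbc : b ≠ c) : tr n a b (idx n c) = idx n c :=
  Equiv.swap_apply_of_ne_of_ne (fun h => hac (idx_injOn hc ha h).symm)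
    (fun h => hbc (idx_injOn hc hb h).symm)

lemma pv_injOn (w : Equiv.Perm (Fin n)) : Set.InjOn (pv w) (Set.Icc 1 n) := fun _ ha _ hb h =>
  idx_injOn ha hb (w.injective (Fin.val_injective (Nat.succ_injective h)))

lemma pv_mem_Icc (w : Equiv.Perm (Fin n)) (a : ℕ) : pv w a ∈ Finset.Icc 1 n :=
  Finset.mem_Icc.2 ⟨Nat.le_add_left _ _, (w (idx n a)).isLt⟩

lemma applyTs_append (w : Equiv.Perm (Fin n)) (L₁ L₂ : List (ℕ × ℕ)) :
    applyTs w (L₁ ++ L₂) = applyTs (applyTs w L₁) L₂ :=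
  List.foldl_append

lemma applyTs_cons (w : Equiv.Perm (Fin n)) (p : ℕ × ℕ) (L : List (ℕ × ℕ)) :
    applyTs w (p :: L) = applyTs (w * tr n p.1 p.2) L :=
  rfl

lemma applyTs_apply_of_forall {L : List (ℕ × ℕ)} {x : Fin n} (w : Equiv.Perm (Fin n))
    (h : ∀ p ∈ L, tr n p.1 p.2 x = x) : applyTs w L x = w x := by
  induction L generalizing w with
  | nil => rfl
  | cons p L ih =>
    rw [applyTs_cons, ih _ fun q hq => h q (List.mem_cons_of_mem _ hq), Equiv.Perm.mul_apply,
      h p List.mem_cons_self]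

lemma applyTs_apply_ne {L : List (ℕ × ℕ)} {k : ℕ} {x y : Fin n} (w : Equiv.Perm (Fin n))
    (hxy : x ≠ y) (hL : L.Pairwise fun p q => q.1 ≤ p.1)
    (hx : ∀ p ∈ L, k ≤ p.1 → tr n p.1 p.2 x = x) (hy : ∀ p ∈ L, p.1 < k → tr n p.1 p.2 y = y) :
    applyTs w L y ≠ w x := by
  induction L generalizing w with
  | nil => exact fun h => hxy (w.injective h).symm
  | cons p L ih =>
    rw [List.pairwise_cons] at hL
    by_cases hp : k ≤ p.1
    · have hfix : (w * tr n p.1 p.2) x = w x := by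
        rw [Equiv.Perm.mul_apply, hx p List.mem_cons_self hp]
      rw [applyTs_cons, ← hfix]
      exact ih _ hL.2 (fun q hq => hx q (List.mem_cons_of_mem _ hq))
        (fun q hq => hy q (List.mem_cons_of_mem _ hq))
    · have hall : ∀ q ∈ p :: L, tr n q.1 q.2 y = y := by
        rintro q (_ | ⟨_, hq⟩)
        · exact hy p List.mem_cons_self (by omega)
        · exact hy q (List.mem_cons_of_mem _ hq) (by have := hL.1 q hq; omega)
      rw [applyTs_apply_of_forall w hall]
      exact fun h => hxy (w.injective h).symm

end Transpositions

section Subsequences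

lemma sort_union_of_lt {A B : Finset ℕ} (h : ∀ a ∈ A, ∀ b ∈ B, a < b) :
    (A ∪ B).sort (· ≤ ·) = A.sort (· ≤ ·) ++ B.sort (· ≤ ·) := by
  have hd : Disjoint A B := Finset.disjoint_left.2 fun a ha hb => (h a ha a hb).false
  refine List.Perm.eq_of_pairwise' (Finset.pairwise_sort _ _) ?_ ?_
  · exact List.pairwise_append.2 ⟨Finset.pairwise_sort _ _, Finset.pairwise_sort _ _,
      fun a ha b hb => (h a (Finset.mem_sort _ |>.1 ha) b (Finset.mem_sort _ |>.1 hb)).le⟩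
  · rw [← Multiset.coe_eq_coe, ← Multiset.coe_add, Finset.sort_eq, Finset.sort_eq,
      Finset.sort_eq, ← Finset.disjUnion_eq_union A B hd]
    rfl

lemma pickP_union {Δ : List (ℕ × ℕ)} {A B : Finset ℕ} (h : ∀ a ∈ A, ∀ b ∈ B, a < b) :
    pickP Δ (A ∪ B) = pickP Δ A ++ pickP Δ B := by
  rw [pickP, sort_union_of_lt h, List.map_append, pickP, pickP]

lemma mem_pickP {Δ : List (ℕ × ℕ)} {S : Finset ℕ} {p : ℕ × ℕ} :
    p ∈ pickP Δ S ↔ ∃ r ∈ S, Δ.getD r (0, 0) = p := by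
  simp [pickP]

lemma pairwise_pickP {Δ : List (ℕ × ℕ)} {S : Finset ℕ} {R : ℕ × ℕ → ℕ × ℕ → Prop}
    (h : ∀ r₁ ∈ S, ∀ r₂ ∈ S, r₁ < r₂ → R (Δ.getD r₁ (0, 0)) (Δ.getD r₂ (0, 0))) :
    (pickP Δ S).Pairwise R :=
  List.pairwise_map.2 <| (Finset.sortedLT_sort S).pairwise.imp_of_mem fun h₁ h₂ =>
    h _ (Finset.mem_sort _ |>.1 h₁) _ (Finset.mem_sort _ |>.1 h₂)

end Subsequences

section ConjugatePartition

variable {n : ℕ} {lam : ℕ → ℕ}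

lemma strictAntiOn_of_regular (hreg : ∀ i, 1 ≤ i → i < n → lam (i + 1) < lam i) :
    StrictAntiOn lam (Set.Icc 1 n) :=
  strictAntiOn_of_succ_lt Set.ordConnected_Icc fun a _ ha hsa => by
    rw [Order.succ_eq_add_one] at hsa ⊢
    exact hreg a ha.1 (by have := hsa.2; omega)

lemma le_conj (hreg : ∀ i, 1 ≤ i → i < n → lam (i + 1) < lam i) {k j : ℕ}
    (hk₁ : 1 ≤ k) (hk₂ : k ≤ n - 1) (hj : j ≤ lam k) : k ≤ conj n lam j := by
  have hsub : Finset.Icc 1 k ⊆ (Finset.Icc 1 (n - 1)).filter fun i => j ≤ lam i := by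
    intro i hi
    rw [Finset.mem_Icc] at hi
    refine Finset.mem_filter.2 ⟨Finset.mem_Icc.2 ⟨hi.1, by omega⟩, hj.trans ?_⟩
    exact (strictAntiOn_of_regular hreg).antitoneOn ⟨hi.1, by omega⟩ ⟨hk₁, by omega⟩ hi.2
  simpa [conj] using Finset.card_le_card hsub

/-- A strictly decreasing `λ` has at most one part equal to `j`. -/
lemma conj_le_conj_succ_add_one (hreg : ∀ i, 1 ≤ i → i < n → lam (i + 1) < lam i) (j : ℕ) :
    conj n lam j ≤ conj n lam (j + 1) + 1 := by
  set s := Finset.Icc 1 (n - 1)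
  have hsub : s.filter (fun i => j ≤ lam i) ⊆
      s.filter (fun i => j + 1 ≤ lam i) ∪ s.filter (fun i => lam i = j) := by
    intro i
    simp only [Finset.mem_union, Finset.mem_filter]
    rintro ⟨hi, hj⟩
    exact hj.eq_or_lt.elim (fun h => Or.inr ⟨hi, h.symm⟩) fun h => Or.inl ⟨hi, h⟩
  have hone : (s.filter fun i => lam i = j).card ≤ 1 := by
    refine Finset.card_le_one.2 fun a ha b hb => ?_
    simp only [s, Finset.mem_filter, Finset.mem_Icc] at ha hb
    exact (strictAntiOn_of_regular hreg).injOn ⟨ha.1.1, by omega⟩ ⟨hb.1.1, by omega⟩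
      (ha.2.trans hb.2.symm)
  calc conj n lam j ≤ _ := Finset.card_le_card hsub
    _ ≤ conj n lam (j + 1) + (s.filter fun i => lam i = j).card := Finset.card_union_le _ _
    _ ≤ conj n lam (j + 1) + 1 := by omega

end ConjugatePartition

section LamChain

variable {n : ℕ} {lam : ℕ → ℕ}

lemma mem_rows {k low : ℕ} {p : ℕ × ℕ}
    (hp : p ∈ (List.range k).flatMap fun s => rowL n (k - s) low) :
    1 ≤ p.1 ∧ p.1 ≤ k ∧ low ≤ p.2 ∧ p.2 ≤ n := by
  simp only [rowL, List.mem_flatMap, List.mem_map, List.mem_range] at hp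
  obtain ⟨s, hs, r, hr, rfl⟩ := hp
  omega

lemma pairwise_rows (k low : ℕ) :
    ((List.range k).flatMap fun s => rowL n (k - s) low).Pairwise fun p q => q.1 ≤ p.1 := by
  refine List.pairwise_flatMap.2 ⟨fun s _ => ?_, List.pairwise_lt_range.imp ?_⟩
  · exact List.pairwise_map.2 (List.pairwise_lt_range.imp fun _ => le_refl _)
  · intro s₁ s₂ hs p hp q hq
    simp only [rowL, List.mem_map] at hp hq
    obtain ⟨_, _, rfl⟩ := hp
    obtain ⟨_, _, rfl⟩ := hq
    omega

lemma lamChain_mem {e : ℕ × ℕ × ℕ} (he : e ∈ lamChain n lam) :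
    1 ≤ e.2.1 ∧ e.2.1 ≤ conj n lam e.1 ∧ conj n lam e.1 < e.2.2 ∧ e.2.2 ≤ n ∧
      (conj n lam (e.1 - 1) ≠ conj n lam e.1 → conj n lam e.1 + 1 < e.2.2) := by
  simp only [lamChain, List.mem_flatMap, List.mem_range, List.mem_map] at he
  obtain ⟨s, -, p, hp, rfl⟩ := he
  dsimp only
  split_ifs at hp with hc
  · have := mem_rows hp
    exact ⟨this.1, this.2.1, this.2.2.1, this.2.2.2, fun h => absurd hc h⟩
  · have := mem_rows hp
    exact ⟨this.1, this.2.1, by omega, this.2.2.2, fun _ => this.2.2.1⟩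

lemma lamChain_pairwise :
    (lamChain n lam).Pairwise fun e f => toLex (f.1, f.2.1) ≤ toLex (e.1, e.2.1) := by
  refine List.pairwise_flatMap.2 ⟨fun s _ => ?_, List.pairwise_lt_range.imp_of_mem ?_⟩
  · refine List.pairwise_map.2 (List.Pairwise.imp (R := fun p q : ℕ × ℕ => q.1 ≤ p.1) ?_ ?_)
    · exact fun h => Prod.Lex.le_iff.2 (Or.inr ⟨rfl, h⟩)
    split_ifs
    exacts [pairwise_rows _ _, pairwise_rows _ _]
  · intro s₁ s₂ hs₁ hs₂ h e he f hf
    simp only [List.mem_range] at hs₁ hs₂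
    simp only [List.mem_map] at he hf
    obtain ⟨_, _, rfl⟩ := he
    obtain ⟨_, _, rfl⟩ := hf
    exact Prod.Lex.le_iff.2 (Or.inl (by simp only [ofLex_toLex]; omega))

/-- Positions past the end of the chain read as `(0, 0, 0)`, which is lexicographically least,
so no bound on `r₂` is needed. -/
lemma lamChain_getD_key_le {r₁ r₂ : ℕ} (h : r₁ < r₂) :
    toLex (((lamChain n lam).getD r₂ (0, 0, 0)).1, ((lamChain n lam).getD r₂ (0, 0, 0)).2.1) ≤
      toLex (((lamChain n lam).getD r₁ (0, 0, 0)).1, ((lamChain n lam).getD r₁ (0, 0, 0)).2.1) := by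
  rcases lt_or_ge r₂ (lamChain n lam).length with h₂ | h₂
  · rw [List.getD_eq_getElem _ _ h₂, List.getD_eq_getElem _ _ (h.trans h₂)]
    exact List.pairwise_iff_getElem.1 lamChain_pairwise _ _ _ _ h
  · rw [List.getD_eq_default _ _ h₂]
    exact Prod.Lex.le_iff.2 (by simp only [ofLex_toLex]; omega)

lemma lamChain_getD_mem {r : ℕ} (hr : ((lamChain n lam).getD r (0, 0, 0)).1 ≠ 0) :
    (lamChain n lam).getD r (0, 0, 0) ∈ lamChain n lam := by
  rcases lt_or_ge r (lamChain n lam).length with h | h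
  · rw [List.getD_eq_getElem _ _ h]
    exact List.getElem_mem h
  · rw [List.getD_eq_default _ _ h] at hr
    exact absurd rfl hr

lemma chainRoots_getD (Γ : List (ℕ × ℕ × ℕ)) (r : ℕ) :
    (chainRoots Γ).getD r (0, 0) = (Γ.getD r (0, 0, 0)).2 :=
  List.getD_map Γ (0, 0, 0) _

end LamChain

section FillingMap

variable {n : ℕ} {lam : ℕ → ℕ}

/-- The segment `T_j` of `T`: the roots of `T` lying in the segment `Γ_j` of the λ-chain. -/
def chainSegment (n : ℕ) (lam : ℕ → ℕ) (J : Finset ℕ) (j : ℕ) : List (ℕ × ℕ) :=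
  pickP (chainRoots (lamChain n lam)) (J.filter fun r => ((lamChain n lam).getD r (0, 0, 0)).1 = j)

lemma pij_eq_applyTs_chainSegment [NeZero n] (w : Equiv.Perm (Fin n)) (J : Finset ℕ) (j : ℕ) :
    pij n lam w J j = applyTs (pij n lam w J (j + 1)) (chainSegment n lam J (j + 1)) := by
  have hsplit : (J.filter fun r => j < ((lamChain n lam).getD r (0, 0, 0)).1) =
      (J.filter fun r => j + 1 < ((lamChain n lam).getD r (0, 0, 0)).1) ∪
        J.filter fun r => ((lamChain n lam).getD r (0, 0, 0)).1 = j + 1 := by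
    ext r
    simp only [Finset.mem_filter, Finset.mem_union, ← and_or_left]
    exact and_congr_right fun _ => by omega
  have hlt : ∀ a ∈ J.filter (fun r => j + 1 < ((lamChain n lam).getD r (0, 0, 0)).1),
      ∀ b ∈ J.filter (fun r => ((lamChain n lam).getD r (0, 0, 0)).1 = j + 1), a < b := by
    intro a ha b hb
    rw [Finset.mem_filter] at ha hb
    by_contra! hba
    rcases hba.lt_or_eq with h | rfl
    · have := Prod.Lex.le_iff.1 (lamChain_getD_key_le (n := n) (lam := lam) h)
      simp only [ofLex_toLex] at this
      omega
    · omega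
  rw [pij, hsplit, pickP_union hlt, applyTs_append]
  rfl

lemma chainSegment_pairwise (J : Finset ℕ) (j : ℕ) :
    (chainSegment n lam J j).Pairwise fun p q => q.1 ≤ p.1 :=
  pairwise_pickP fun r₁ h₁ r₂ h₂ h => by
    rw [Finset.mem_filter] at h₁ h₂
    have := Prod.Lex.le_iff.1 (lamChain_getD_key_le (n := n) (lam := lam) h)
    simp only [ofLex_toLex] at this
    rw [chainRoots_getD, chainRoots_getD]
    omega

/-- A root `(a, b)` of `T_{j+1}` has `b > λ'_j`: for `λ'_j = λ'_{j+1}` this is the bound of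
`Γ(λ'_{j+1})`, otherwise `λ'_j = λ'_{j+1} + 1` and `Γ_{j+1} = Γ'(λ'_{j+1})` omits `b = λ'_j`. -/
lemma root_bounds_of_mem_chainSegment (hreg : ∀ i, 1 ≤ i → i < n → lam (i + 1) < lam i)
    {J : Finset ℕ} {j : ℕ} {p : ℕ × ℕ} (hp : p ∈ chainSegment n lam J (j + 1)) :
    1 ≤ p.1 ∧ p.1 < p.2 ∧ conj n lam j < p.2 ∧ p.2 ≤ n := by
  obtain ⟨r, hr, rfl⟩ := mem_pickP.1 hp
  rw [Finset.mem_filter] at hr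
  rw [chainRoots_getD]
  have hbounds := lamChain_mem (lamChain_getD_mem (n := n) (lam := lam) (r := r) (by omega))
  rw [hr.2, Nat.add_sub_cancel] at hbounds
  have := conj_le_conj_succ_add_one hreg j
  by_cases hc : conj n lam j = conj n lam (j + 1)
  · omega
  · have := hbounds.2.2.2.2 hc
    omega

lemma mem_cells {c : ℕ × ℕ} (hc : c ∈ cells n lam) :
    1 ≤ c.1 ∧ c.1 ≤ n - 1 ∧ 1 ≤ c.2 ∧ c.2 ≤ lam c.1 := by
  simp only [cells, Finset.mem_filter, Finset.mem_product, Finset.mem_Icc] at hc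
  omega

variable [NeZero n] (w : Equiv.Perm (Fin n)) (J : Finset ℕ)

lemma fmap_of_mem {c : ℕ × ℕ} (hc : c ∈ cells n lam) :
    fmap n lam w J c = pv (pij n lam w J c.2) c.1 :=
  if_pos hc

lemma fmap_ne_of_snd_eq {u v : ℕ × ℕ} (hu : u ∈ cells n lam) (hv : v ∈ cells n lam)
    (hcol : u.2 = v.2) (hrow : u.1 ≠ v.1) : fmap n lam w J u ≠ fmap n lam w J v := by
  obtain ⟨hu₁, hu₂, -⟩ := mem_cells hu
  obtain ⟨hv₁, hv₂, -⟩ := mem_cells hv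
  rw [fmap_of_mem w J hu, fmap_of_mem w J hv, hcol]
  exact fun h => hrow (pv_injOn _ ⟨hu₁, by omega⟩ ⟨hv₁, by omega⟩ h)

lemma fmap_ne_of_snd_eq_succ (hreg : ∀ i, 1 ≤ i → i < n → lam (i + 1) < lam i)
    {u v : ℕ × ℕ} (hu : u ∈ cells n lam) (hv : v ∈ cells n lam)
    (hcol : u.2 = v.2 + 1) (hrow : u.1 < v.1) : fmap n lam w J u ≠ fmap n lam w J v := by
  obtain ⟨hu₁, hu₂, -⟩ := mem_cells hu
  obtain ⟨hv₁, hv₂, -, hv₄⟩ := mem_cells hv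
  have hk : v.1 ≤ conj n lam v.2 := le_conj hreg hv₁ hv₂ hv₄
  rw [fmap_of_mem w J hu, fmap_of_mem w J hv, hcol, pij_eq_applyTs_chainSegment w J v.2]
  intro h
  refine applyTs_apply_ne (k := v.1) _ ?_ (chainSegment_pairwise J _) ?_ ?_
    (Fin.val_injective (Nat.succ_injective h)).symm
  · exact fun h => hrow.ne (idx_injOn ⟨hu₁, by omega⟩ ⟨hv₁, by omega⟩ h)
  · intro p hp hpk
    have := root_bounds_of_mem_chainSegment hreg hp
    exact tr_apply_idx_of_ne ⟨this.1, by omega⟩ ⟨by omega, this.2.2.2⟩ ⟨hu₁, by omega⟩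
      (by omega) (by omega)
  · intro p hp hpk
    have := root_bounds_of_mem_chainSegment hreg hp
    exact tr_apply_idx_of_ne ⟨this.1, by omega⟩ ⟨by omega, this.2.2.2⟩ ⟨hv₁, by omega⟩
      (by omega) (by omega)

end FillingMap

theorem fmap_nonattacking_general (n : ℕ) [NeZero n] (lam : ℕ → ℕ)
    (hreg : ∀ i, 1 ≤ i → i < n → lam (i + 1) < lam i)
    (w : Equiv.Perm (Fin n)) (J : Finset ℕ) :
    NonAttacking n lam (fmap n lam w J) := by
  refine ⟨fun u hu => fmap_of_mem w J hu ▸ pv_mem_Icc _ _, ?_⟩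
  rintro u hu v hv (⟨hcol, hrow⟩ | ⟨hcol, hrow⟩ | ⟨hcol, hrow⟩)
  · exact fmap_ne_of_snd_eq w J hu hv hcol hrow
  · exact fmap_ne_of_snd_eq_succ w J hreg hu hv hcol hrow
  · exact (fmap_ne_of_snd_eq_succ w J hreg hv hu hcol hrow).symm

/-- For every folding pair `(w,T) ∈ ℱ(λ)`, the filling `f(w,T)` is a
nonattacking filling with entries in `{1,…,n}`; that is, `f(ℱ(λ)) ⊆ T(λ,n)`. -/
theorem fmap_nonattacking (n : ℕ) [NeZero n] (hn : 2 ≤ n) (lam : ℕ → ℕ)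
    (hreg : ∀ i, 1 ≤ i → i < n → lam (i + 1) < lam i) (hzero : lam n = 0)
    (w : Equiv.Perm (Fin n)) (J : Finset ℕ)
    (hJ : J ⊆ Finset.range (lamChain n lam).length) :
    NonAttacking n lam (fmap n lam w J) :=
  fmap_nonattacking_general n lam hreg w J

end Compress
end

section
/- Let C_1 and C_2 be sequences of length p with entries in {1,…,n} such that the two-column filling C_2C_1 is nonattacking. For pairs 1 ≤ i < k ≤ p consider the two conditions (D1): C_1(i) > C_1(k), and (D2): C_1(k) > C_2(i). Let N_{d∧d} be the number of pairs satisfying both (D1) and (D2), let N_{a∧a} be the number of pairs satisfying neither, and let L = Σ_{i : C_1(i) > C_2(i)} (p − i). Then C(p,2) − inv(C_2C_1) − L + inv(C_2) = N_{a∧a} − N_{d∧d}, where C(p,2) is the binomial coefficient p choose 2. -/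
open Finset

namespace Compress

attribute [local instance] Classical.propDecidable

end Compress

/-!
Sorting the attacking inversions of `C_2C_1` by the columns of their two cells gives
`|Inv(C_2C_1)| = inv(C_1) + #{i < k : C_2(i) < C_1(k)} + inv(C_2)`. The legs in `inv(C_2C_1)`
cancel against `L`, so the left side is `C(p,2)` minus the numbers of pairs `i < k` satisfying
(D1) and (D2), which by inclusion–exclusion is `N_{a∧a} − N_{d∧d}`.
-/

namespace Compress

theorem card_filter_not_and_not_sub_card_filter_and {α : Type*} [DecidableEq α] (s : Finset α)
    (P Q : α → Prop) [DecidablePred P] [DecidablePred Q] :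
    (#{x ∈ s | ¬P x ∧ ¬Q x} : ℤ) - #{x ∈ s | P x ∧ Q x} = #s - #{x ∈ s | P x} - #{x ∈ s | Q x} := by
  have hunion := card_union_add_card_inter {x ∈ s | P x} {x ∈ s | Q x}
  have hcompl := card_filter_add_card_filter_not (s := s) fun x => P x ∨ Q x
  rw [← filter_or, ← filter_and] at hunion
  simp only [not_or] at hcompl
  omega

/-- `x = (i, k)` stands for the attacking cells `(k,1)`, read first, and `(i,2)`. -/
def invBetween (C2 C1 : ℕ → ℕ) (p p' : ℕ) : ℕ :=
  #{x ∈ Icc 1 p ×ˢ Icc 1 p' | x.1 < x.2 ∧ C2 x.1 < C1 x.2}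

theorem invPairs2_eq (C2 C1 : ℕ → ℕ) (p p' : ℕ) :
    invPairs2 C2 C1 p p' = invColumn C1 p' + invBetween C2 C1 p p' + invColumn C2 p := by
  have hsplit : invPairs2 C2 C1 p p' =
      #(({x ∈ Icc 1 p' ×ˢ Icc 1 p' | x.1 < x.2 ∧ C1 x.2 < C1 x.1}.image
          (fun x => ((x.1, 1), (x.2, 1))) ∪
        {x ∈ Icc 1 p ×ˢ Icc 1 p' | x.1 < x.2 ∧ C2 x.1 < C1 x.2}.image
          (fun x => ((x.2, 1), (x.1, 2)))) ∪
        {x ∈ Icc 1 p ×ˢ Icc 1 p | x.1 < x.2 ∧ C2 x.2 < C2 x.1}.image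
          (fun x => ((x.1, 2), (x.2, 2)))) := by
    unfold invPairs2
    congr 1
    ext ⟨⟨i, a⟩, k, b⟩
    simp only [attack, ne_eq, readBefore, entry2, cells2, product_singleton, product_union,
      union_product, union_assoc, mem_filter, mem_union, mem_product, mem_map, mem_Icc,
      Function.Embedding.coeFn_mk, Prod.mk.injEq, ↓existsAndEq, true_and, mem_image, Prod.exists]
    split_ifs <;> omega
  rw [hsplit, card_union_of_disjoint (disjoint_left.2 ?_), card_union_of_disjoint (disjoint_left.2 ?_),
    card_image_of_injective _ ?_, card_image_of_injective _ ?_, card_image_of_injective _ ?_]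
  · rfl
  iterate 3 intro x y h; simp only [Prod.mk.injEq] at h; exact Prod.ext_iff.2 (by tauto)
  all_goals
    simp only [mem_union, mem_image, not_exists, not_and]
    rintro _ h x - rfl
    simp only [Prod.mk.injEq] at h
    grind

theorem two_column_statistic_general (p : ℕ) (C1 C2 : ℕ → ℕ) :
    (p.choose 2 : ℤ) - inv2 C2 C1 p p
        - (∑ i ∈ (Finset.Icc 1 p).filter fun i => C2 i < C1 i, ((p : ℤ) - (i : ℤ)))
        + (invColumn C2 p : ℤ)
      = ((((Finset.Icc 1 p) ×ˢ (Finset.Icc 1 p)).filter fun x =>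
            x.1 < x.2 ∧ ¬ C1 x.2 < C1 x.1 ∧ ¬ C2 x.1 < C1 x.2).card : ℤ)
        - ((((Finset.Icc 1 p) ×ˢ (Finset.Icc 1 p)).filter fun x =>
            x.1 < x.2 ∧ C1 x.2 < C1 x.1 ∧ C2 x.1 < C1 x.2).card : ℤ) := by
  have hpairs : #{x ∈ Icc 1 p ×ˢ Icc 1 p | x.1 < x.2} = p.choose 2 := by
    simpa using card_product_filter_lt (s := Icc 1 p)
  have hincl := card_filter_not_and_not_sub_card_filter_and {x ∈ Icc 1 p ×ˢ Icc 1 p | x.1 < x.2}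
    (fun x => C1 x.2 < C1 x.1) (fun x => C2 x.1 < C1 x.2)
  simp only [filter_filter, hpairs] at hincl
  rw [hincl, inv2, invPairs2_eq, invColumn, invBetween]
  push_cast
  ring

/-- For a nonattacking two-column filling `C_2C_1` with both columns of
length `p`: `C(p,2) − inv(C_2C_1) − L + inv(C_2) = N_{a∧a} − N_{d∧d}`, where `L` is the sum
of the legs of the descents, `N_{d∧d}` counts pairs `i < k` with `C_1(i) > C_1(k)` and
`C_1(k) > C_2(i)`, and `N_{a∧a}` counts pairs satisfying neither condition. -/
theorem two_column_statistic (n p : ℕ) (C1 C2 : ℕ → ℕ)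
    (hC1 : ∀ i ∈ Finset.Icc 1 p, C1 i ∈ Finset.Icc 1 n)
    (hC2 : ∀ i ∈ Finset.Icc 1 p, C2 i ∈ Finset.Icc 1 n)
    (hna : ∀ u ∈ cells2 p p, ∀ v ∈ cells2 p p, attack u v → entry2 C2 C1 u ≠ entry2 C2 C1 v) :
    (p.choose 2 : ℤ) - inv2 C2 C1 p p
        - (∑ i ∈ (Finset.Icc 1 p).filter fun i => C2 i < C1 i, ((p : ℤ) - (i : ℤ)))
        + (invColumn C2 p : ℤ)
      = ((((Finset.Icc 1 p) ×ˢ (Finset.Icc 1 p)).filter fun x =>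
            x.1 < x.2 ∧ ¬ C1 x.2 < C1 x.1 ∧ ¬ C2 x.1 < C1 x.2).card : ℤ)
        - ((((Finset.Icc 1 p) ×ˢ (Finset.Icc 1 p)).filter fun x =>
            x.1 < x.2 ∧ C1 x.2 < C1 x.1 ∧ C2 x.1 < C1 x.2).card : ℤ) :=
  two_column_statistic_general p C1 C2

end Compress
end
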